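/- The composition of the strict approximation order with the term equivalence on either side is contained in the strict order: >ₖ · ≈ ⊆ >ₖ and ≈ · >ₖ ⊆ >ₖ. -/

import Mathlib

inductive Term (F V : Type) : Type
  | var : V → Term F V
  | fn : F → List (Term F V) → Term F V

namespace Term
variable {F V : Type}

mutual
  def size : Term F V → ℕ
    | .var _ => 1
    | .fn _ ts => 1 + sizeList ts
  def sizeList : List (Term F V) → ℕ
    | [] => 0
    | t :: ts => size t + sizeList ts
end

mutual
  def depth : Term F V → ℕ
    | .var _ => 0
    | .fn _ ts => 1 + depthList ts
  def depthList : List (Term F V) → ℕ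
    | [] => 0
    | t :: ts => max (depth t) (depthList ts)
end

mutual
  def width : Term F V → ℕ
    | .var _ => 1
    | .fn _ [] => 1
    | .fn _ (t :: ts) => max (ts.length + 1) (max (width t) (widthList ts))
  def widthList : List (Term F V) → ℕ
    | [] => 1
    | t :: ts => max (width t) (widthList ts)
end

mutual
  def bnorm : Term F V → ℕ
    | .var _ => 1
    | .fn _ ts => 1 + max ts.length (bnormList ts)
  def bnormList : List (Term F V) → ℕ
    | [] => 0
    | t :: ts => max (bnorm t) (bnormList ts)
end

mutual
  def subst (σ : V → Term F V) : Term F V → Term F V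
    | .var x => σ x
    | .fn f ts => .fn f (substList σ ts)
  def substList (σ : V → Term F V) : List (Term F V) → List (Term F V)
    | [] => []
    | t :: ts => subst σ t :: substList σ ts
end

/-- The equivalence on terms induced by an equivalence `eqv` on function symbols:
`s ≈ t` iff `s = t`, or the roots are equivalent and the arguments are pairwise
equivalent up to a permutation. -/
inductive TermEq (eqv : F → F → Prop) : Term F V → Term F V → Prop
  | refl (t) : TermEq eqv t t
  | fn {f g : F} {ss ts : List (Term F V)} (hfg : eqv f g)
      (π : Fin ss.length → Fin ts.length) (hbij : Function.Bijective π)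
      (h : ∀ i, TermEq eqv (ss.get i) (ts.get (π i))) :
      TermEq eqv (.fn f ss) (.fn g ts)

/-- The (reflexive) subterm relation. -/
inductive Subterm : Term F V → Term F V → Prop
  | refl (t) : Subterm t t
  | arg {s t : Term F V} {f : F} {ts : List (Term F V)} :
      t ∈ ts → Subterm s t → Subterm s (.fn f ts)

end Term

/-- Sequences: terms over the signature extended by a fresh variadic symbol `∘`
(represented by `none`). -/
abbrev SeqT (F V : Type) := Term (Option F) V

namespace Term
variable {F V : Type}

/-- The strict precedence induced by a quasi-precedence `qp`. -/
def Precedes (qp : F → F → Prop) (f g : F) : Prop := qp f g ∧ ¬ qp g f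

/-- The equivalence on the extended signature induced by `qp`
(the fresh symbol `∘` is only equivalent to itself). -/
def eqvO (qp : F → F → Prop) : Option F → Option F → Prop :=
  fun a b => match a, b with
  | some f, some g => qp f g ∧ qp g f
  | none, none => True
  | _, _ => False

/-- `{s} ≈^mul N`: the multiset `N` is a singleton equivalent to `s`. -/
def IsEqvSingleton (qp : F → F → Prop) (s : SeqT F V) (N : Multiset (SeqT F V)) : Prop :=
  ∃ u, N = {u} ∧ TermEq (eqvO qp) s u

/-- The auxiliary order `▷ₖˡ` of the approximation of the polynomial path order
on sequences (Definition 1).  The second `ℕ`-index is the depth parameter `l`;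
clauses that descend in `l` conclude at `l+1`. -/
inductive Gpp (qp : F → F → Prop) (k : ℕ) : ℕ → SeqT F V → SeqT F V → Prop
  | sub {l} {h : Option F} {ss : List (SeqT F V)} {si t : SeqT F V} :
      si ∈ ss → Gpp qp k l si t → Gpp qp k l (.fn h ss) t
  | sub_eq {l} {h : Option F} {ss : List (SeqT F V)} {si t : SeqT F V} :
      si ∈ ss → TermEq (eqvO qp) si t → Gpp qp k l (.fn h ss) t
  | prec {l} {f g : F} {ss ts : List (SeqT F V)} :
      Precedes qp f g →
      (∀ t' ∈ ts, Gpp qp k l (.fn (some f) ss) t') →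
      ts.length < k + width (.fn (some f) ss) →
      Gpp qp k (l+1) (.fn (some f) ss) (.fn (some g) ts)
  | seq {l} {f : F} {ss ts : List (SeqT F V)} :
      (∀ t' ∈ ts, Gpp qp k l (.fn (some f) ss) t') →
      ts.length < k + width (.fn (some f) ss) →
      Gpp qp k (l+1) (.fn (some f) ss) (.fn none ts)
  | mult {l} {ss ts : List (SeqT F V)} (N : Fin ss.length → Multiset (SeqT F V)) :
      (ts : Multiset (SeqT F V)) = ∑ i, N i →
      (∃ i, ¬ IsEqvSingleton qp (ss.get i) (N i)) →
      (∀ i, ¬ IsEqvSingleton qp (ss.get i) (N i) → ∀ r ∈ N i, Gpp qp k l (ss.get i) r) →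
      ts.length < k + width (.fn none ss) →
      Gpp qp k l (.fn none ss) (.fn none ts)

/-- The approximation `>ₖˡ` of the polynomial path order on sequences
(Definition 2). -/
inductive Gpop (qp : F → F → Prop) (k : ℕ) : ℕ → SeqT F V → SeqT F V → Prop
  | base {l} {s t : SeqT F V} : Gpp qp k l s t → Gpop qp k l s t
  | sub {l} {h : Option F} {ss : List (SeqT F V)} {si t : SeqT F V} :
      si ∈ ss → Gpop qp k l si t → Gpop qp k l (.fn h ss) t
  | sub_eq {l} {h : Option F} {ss : List (SeqT F V)} {si t : SeqT F V} :
      si ∈ ss → TermEq (eqvO qp) si t → Gpop qp k l (.fn h ss) t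
  | seq {l} {f : F} {ss ts : List (SeqT F V)} (j0 : Fin ts.length) :
      Gpop qp k l (.fn (some f) ss) (ts.get j0) →
      (∀ j : Fin ts.length, j ≠ j0 → Gpp qp k l (.fn (some f) ss) (ts.get j)) →
      ts.length < k + width (.fn (some f) ss) →
      Gpop qp k (l+1) (.fn (some f) ss) (.fn none ts)
  | eqv {l} {f g : F} {ss ts : List (SeqT F V)} :
      qp f g → qp g f →
      Gpop qp k l (.fn none ss) (.fn none ts) →
      Gpop qp k l (.fn (some f) ss) (.fn (some g) ts)
  | mult {l} {ss ts : List (SeqT F V)} (N : Fin ss.length → Multiset (SeqT F V)) :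
      (ts : Multiset (SeqT F V)) = ∑ i, N i →
      (∃ i, ¬ IsEqvSingleton qp (ss.get i) (N i)) →
      (∀ i, ¬ IsEqvSingleton qp (ss.get i) (N i) → ∀ r ∈ N i, Gpop qp k l (ss.get i) r) →
      ts.length < k + width (.fn none ss) →
      Gpop qp k l (.fn none ss) (.fn none ts)

end Term

open Term

/-!
Both inclusions are proved by induction on the derivation of `>ₖˡ` (and of `▷ₖˡ`, which it
invokes), for every depth `l`. An equivalence between two function terms consists of
equivalent heads and a bijection of the arguments matching equivalent arguments, and each
clause is re-derived along that bijection: width bounds survive because `≈` preserves width,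
precedence conditions because equivalent symbols are interchangeable in the quasi-precedence,
and in the multiset clauses the decomposition `∑ i, N i` of the arguments is transported
through the bijection on the right, or reindexed along it on the left.
-/

namespace List

variable {α β : Type*} {r : α → β → Prop} {l₁ : List α} {l₂ : List β}

theorem rel_coe_of_equiv (π : Fin l₁.length ≃ Fin l₂.length)
    (h : ∀ i, r (l₁.get i) (l₂.get (π i))) : Multiset.Rel r (l₁ : Multiset α) l₂ := by
  have h₁ : (l₁ : Multiset α) = Finset.univ.val.map l₁.get := by
    rw [Fin.univ_val_map, List.ofFn_get]
  have h₂ : (l₂ : Multiset β) = Finset.univ.val.map l₂.get := by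
    rw [Fin.univ_val_map, List.ofFn_get]
  rw [h₁, h₂, ← Multiset.map_univ_val_equiv π, Multiset.map_map, Multiset.rel_map]
  exact Multiset.rel_refl_of_refl_on fun i _ => h i

theorem exists_mem_rel_of_equiv (π : Fin l₁.length ≃ Fin l₂.length)
    (h : ∀ i, r (l₁.get i) (l₂.get (π i))) {b : β} (hb : b ∈ l₂) : ∃ a ∈ l₁, r a b :=
  Multiset.exists_mem_of_rel_of_mem (Multiset.rel_flip.2 (rel_coe_of_equiv π h)) hb

end List

namespace Multiset

variable {α β : Type*} {r : α → β → Prop}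

theorem exists_eq_singleton_of_rel_singleton_left {a : α} {t : Multiset β} (h : Rel r {a} t) :
    ∃ b, t = {b} ∧ r a b := by
  obtain ⟨b, t', hab, ht', rfl⟩ := rel_cons_left.1 h
  exact ⟨b, by rw [rel_zero_left.1 ht']; rfl, hab⟩

theorem exists_eq_singleton_of_rel_singleton_right {s : Multiset α} {b : β} (h : Rel r s {b}) :
    ∃ a, s = {a} ∧ r a b :=
  exists_eq_singleton_of_rel_singleton_left (rel_flip.2 h)

theorem exists_eq_sum_of_rel_sum {ι : Type*} (s : Finset ι) (M : ι → Multiset α) {u : Multiset β}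
    (h : Rel r (∑ i ∈ s, M i) u) :
    ∃ N : ι → Multiset β, u = ∑ i ∈ s, N i ∧ ∀ i ∈ s, Rel r (M i) (N i) := by
  classical
  induction s using Finset.induction generalizing u with
  | empty => exact ⟨0, by simpa using h, by simp⟩
  | insert a s ha ih =>
    rw [Finset.sum_insert ha, rel_add_left] at h
    obtain ⟨u₁, u₂, h₁, h₂, rfl⟩ := h
    obtain ⟨N, rfl, hN⟩ := ih h₂
    refine ⟨Function.update N a u₁, ?_, ?_⟩
    · rw [Finset.sum_insert ha, Function.update_self, Finset.sum_update_of_notMem ha]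
    · intro i hi
      rcases Finset.mem_insert.1 hi with rfl | hi
      · rwa [Function.update_self]
      · rw [Function.update_of_ne (ne_of_mem_of_not_mem hi ha)]
        exact hN i hi

end Multiset

namespace Term

variable {F V : Type}

theorem width_fn (f : F) (ss : List (Term F V)) :
    width (.fn f ss) = max ss.length (widthList ss) := by
  cases ss <;> simp [width, widthList]

theorem widthList_eq_fold (l : List (Term F V)) :
    widthList l = ((l : Multiset (Term F V)).map width).fold max 1 := by
  induction l with
  | nil => simp [widthList]
  | cons t ts ih =>
    rw [widthList, ih, ← Multiset.cons_coe, Multiset.map_cons, Multiset.fold_cons_left]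

section TermEq

variable {eqv : F → F → Prop} {s t u : Term F V}

theorem TermEq.symm [Std.Symm eqv] (h : TermEq eqv s t) : TermEq eqv t s := by
  induction h with
  | refl t => exact .refl t
  | fn hfg π hπ _ ih =>
    let e := Equiv.ofBijective π hπ
    refine .fn (symm_of eqv hfg) e.symm e.symm.bijective fun j => ?_
    simpa [e, Equiv.ofBijective_apply_symm_apply] using ih (e.symm j)

theorem TermEq.trans [IsTrans F eqv] (h₁ : TermEq eqv s t) (h₂ : TermEq eqv t u) :
    TermEq eqv s u := by
  induction h₁ generalizing u with
  | refl => exact h₂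
  | fn hfg π hπ h ih =>
    cases h₂ with
    | refl => exact .fn hfg π hπ h
    | fn hgh ρ hρ h' =>
      exact .fn (trans_of eqv hfg hgh) (ρ ∘ π) (hρ.comp hπ) fun i => ih i (h' _)

theorem TermEq.exists_of_fn_left [Std.Refl eqv] {a : F} {ss : List (Term F V)}
    (h : TermEq eqv (.fn a ss) u) :
    ∃ b us, u = .fn b us ∧ eqv a b ∧
      ∃ π : Fin ss.length ≃ Fin us.length, ∀ i, TermEq eqv (ss.get i) (us.get (π i)) := by
  cases h with
  | refl => exact ⟨a, ss, rfl, refl_of eqv a, Equiv.refl _, fun i => .refl _⟩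
  | fn hab π hπ h => exact ⟨_, _, rfl, hab, Equiv.ofBijective π hπ, h⟩

theorem TermEq.exists_of_fn_right [Std.Refl eqv] {b : F} {ts : List (Term F V)}
    (h : TermEq eqv s (.fn b ts)) :
    ∃ a ss, s = .fn a ss ∧ eqv a b ∧
      ∃ π : Fin ss.length ≃ Fin ts.length, ∀ i, TermEq eqv (ss.get i) (ts.get (π i)) := by
  cases h with
  | refl => exact ⟨b, ts, rfl, refl_of eqv b, Equiv.refl _, fun i => .refl _⟩
  | fn hab π hπ h => exact ⟨_, _, rfl, hab, Equiv.ofBijective π hπ, h⟩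

theorem TermEq.width_eq (h : TermEq eqv s t) : width s = width t := by
  induction h with
  | refl => rfl
  | fn _ π hπ _ ih =>
    let e := Equiv.ofBijective π hπ
    have hmap := Multiset.rel_eq.1 <| Multiset.rel_map.2 <|
      List.rel_coe_of_equiv (r := fun a b => width a = width b) e ih
    rw [width_fn, width_fn, Fin.equiv_iff_eq.1 ⟨e⟩, widthList_eq_fold, widthList_eq_fold, hmap]

end TermEq

section eqvO

variable {qp : F → F → Prop}

instance [Std.Refl qp] : Std.Refl (eqvO qp) where
  refl
    | some f => ⟨refl_of qp f, refl_of qp f⟩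
    | none => trivial

instance : Std.Symm (eqvO qp) where
  symm
    | some _, some _, h => ⟨h.2, h.1⟩
    | none, none, _ => trivial

instance [IsTrans F qp] : IsTrans (Option F) (eqvO qp) where
  trans
    | some _, some _, some _, h₁, h₂ => ⟨trans_of qp h₁.1 h₂.1, trans_of qp h₂.2 h₁.2⟩
    | none, none, none, _, _ => trivial

theorem eqvO_none_left {b : Option F} : eqvO qp none b ↔ b = none := by
  cases b <;> simp [eqvO]

theorem eqvO_none_right {a : Option F} : eqvO qp a none ↔ a = none := by
  cases a <;> simp [eqvO]

theorem eqvO_some_left {f : F} {b : Option F} :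
    eqvO qp (some f) b ↔ ∃ g, b = some g ∧ qp f g ∧ qp g f := by
  cases b <;> simp [eqvO]

theorem eqvO_some_right {a : Option F} {g : F} :
    eqvO qp a (some g) ↔ ∃ f, a = some f ∧ qp f g ∧ qp g f := by
  cases a <;> simp [eqvO]

theorem precedes_of_precedes_of_qp [IsTrans F qp] {f g g' : F} (hfg : Precedes qp f g)
    (hgg' : qp g g') : Precedes qp f g' :=
  ⟨trans_of qp hfg.1 hgg', fun hg'f => hfg.2 (trans_of qp hgg' hg'f)⟩

theorem precedes_of_qp_of_precedes [IsTrans F qp] {f' f g : F} (hf'f : qp f' f)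
    (hfg : Precedes qp f g) : Precedes qp f' g :=
  ⟨trans_of qp hf'f hfg.1, fun hgf' => hfg.2 (trans_of qp hgf' hf'f)⟩

end eqvO

variable {qp : F → F → Prop} {s s' t u : SeqT F V}

theorem isEqvSingleton_congr_left [IsTrans F qp] (hss' : TermEq (eqvO qp) s s')
    {N : Multiset (SeqT F V)} : IsEqvSingleton qp s N ↔ IsEqvSingleton qp s' N := by
  constructor <;> rintro ⟨u, rfl, hu⟩
  exacts [⟨u, rfl, hss'.symm.trans hu⟩, ⟨u, rfl, hss'.trans hu⟩]

theorem isEqvSingleton_congr_right [IsTrans F qp] {N N' : Multiset (SeqT F V)}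
    (hN : Multiset.Rel (TermEq (eqvO qp)) N N') :
    IsEqvSingleton qp s N ↔ IsEqvSingleton qp s N' := by
  constructor
  · rintro ⟨u, rfl, hu⟩
    obtain ⟨v, rfl, huv⟩ := Multiset.exists_eq_singleton_of_rel_singleton_left hN
    exact ⟨v, rfl, hu.trans huv⟩
  · rintro ⟨v, rfl, hv⟩
    obtain ⟨u, rfl, huv⟩ := Multiset.exists_eq_singleton_of_rel_singleton_right hN
    exact ⟨u, rfl, hv.trans huv.symm⟩

/-- The side condition of the `mult` clauses of `Gpp` and `Gpop`, for the relation `R`. -/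
def MultDecomp (qp : F → F → Prop) (R : SeqT F V → SeqT F V → Prop) (ss ts : List (SeqT F V))
    (N : Fin ss.length → Multiset (SeqT F V)) : Prop :=
  (ts : Multiset (SeqT F V)) = ∑ i, N i ∧ (∃ i, ¬ IsEqvSingleton qp (ss.get i) (N i)) ∧
    ∀ i, ¬ IsEqvSingleton qp (ss.get i) (N i) → ∀ r ∈ N i, R (ss.get i) r

theorem MultDecomp.exists_of_rel [IsTrans F qp] {R : SeqT F V → SeqT F V → Prop}
    {ss ts us : List (SeqT F V)} {N : Fin ss.length → Multiset (SeqT F V)}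
    (h : MultDecomp qp (fun s r => ∀ u, TermEq (eqvO qp) r u → R s u) ss ts N)
    (hrel : Multiset.Rel (TermEq (eqvO qp)) (ts : Multiset (SeqT F V)) us) :
    ∃ N', MultDecomp qp R ss us N' := by
  obtain ⟨hsum, ⟨i, hi⟩, hall⟩ := h
  rw [hsum] at hrel
  obtain ⟨N', hsum', hN⟩ := Multiset.exists_eq_sum_of_rel_sum Finset.univ N hrel
  replace hN i := hN i (Finset.mem_univ i)
  refine ⟨N', hsum', ⟨i, by rwa [← isEqvSingleton_congr_right (hN i)]⟩, fun i hi r hr => ?_⟩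
  obtain ⟨a, ha, har⟩ := Multiset.exists_mem_of_rel_of_mem (Multiset.rel_flip.2 (hN i)) hr
  exact hall i (by rwa [isEqvSingleton_congr_right (hN i)]) a ha r har

theorem MultDecomp.reindex [IsTrans F qp] {R : SeqT F V → SeqT F V → Prop}
    {ss' ss ts : List (SeqT F V)} {N : Fin ss.length → Multiset (SeqT F V)}
    (π : Fin ss'.length ≃ Fin ss.length) (hπ : ∀ i, TermEq (eqvO qp) (ss'.get i) (ss.get (π i)))
    (h : MultDecomp qp (fun t r => ∀ s, TermEq (eqvO qp) s t → R s r) ss ts N) :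
    MultDecomp qp R ss' ts fun i => N (π i) := by
  obtain ⟨hsum, ⟨j, hj⟩, hall⟩ := h
  refine ⟨hsum.trans (π.sum_comp N).symm, ⟨π.symm j, ?_⟩,
    fun i hi r hr => hall (π i) ?_ r hr _ (hπ i)⟩
  · rw [isEqvSingleton_congr_left (hπ _)]
    simpa using hj
  · rwa [← isEqvSingleton_congr_left (hπ i)]

variable {k l : ℕ}

theorem Gpp.termEq_right [Std.Refl qp] [IsTrans F qp] (h : Gpp qp k l s t)
    (hu : TermEq (eqvO qp) t u) : Gpp qp k l s u := by
  induction h generalizing u with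
  | sub hmem _ ih => exact .sub hmem (ih hu)
  | sub_eq hmem heq => exact .sub_eq hmem (heq.trans hu)
  | prec hfg _ hlen ih =>
    obtain ⟨b, us, rfl, hgb, π, hπ⟩ := hu.exists_of_fn_left
    obtain ⟨g', rfl, hgg', -⟩ := eqvO_some_left.1 hgb
    refine .prec (precedes_of_precedes_of_qp hfg hgg') (fun u hu => ?_)
      (Fin.equiv_iff_eq.1 ⟨π⟩ ▸ hlen)
    obtain ⟨t, ht, htu⟩ := List.exists_mem_rel_of_equiv π hπ hu
    exact ih t ht htu
  | seq _ hlen ih =>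
    obtain ⟨b, us, rfl, hb, π, hπ⟩ := hu.exists_of_fn_left
    obtain rfl := eqvO_none_left.1 hb
    refine .seq (fun u hu => ?_) (Fin.equiv_iff_eq.1 ⟨π⟩ ▸ hlen)
    obtain ⟨t, ht, htu⟩ := List.exists_mem_rel_of_equiv π hπ hu
    exact ih t ht htu
  | mult N hsum hex _ hlen ih =>
    obtain ⟨b, us, rfl, hb, π, hπ⟩ := hu.exists_of_fn_left
    obtain rfl := eqvO_none_left.1 hb
    obtain ⟨N', hsum', hex', hall'⟩ :=
      MultDecomp.exists_of_rel ⟨hsum, hex, ih⟩ (List.rel_coe_of_equiv π hπ)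
    exact .mult N' hsum' hex' hall' (Fin.equiv_iff_eq.1 ⟨π⟩ ▸ hlen)

theorem Gpp.termEq_left [Std.Refl qp] [IsTrans F qp] (h : Gpp qp k l t u)
    (hs : TermEq (eqvO qp) s t) : Gpp qp k l s u := by
  induction h generalizing s with
  | sub hmem _ ih =>
    obtain ⟨a, ss, rfl, -, π, hπ⟩ := hs.exists_of_fn_right
    obtain ⟨s', hs', hs'i⟩ := List.exists_mem_rel_of_equiv π hπ hmem
    exact .sub hs' (ih hs'i)
  | sub_eq hmem heq =>
    obtain ⟨a, ss, rfl, -, π, hπ⟩ := hs.exists_of_fn_right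
    obtain ⟨s', hs', hs'i⟩ := List.exists_mem_rel_of_equiv π hπ hmem
    exact .sub_eq hs' (hs'i.trans heq)
  | prec hfg _ hlen ih =>
    obtain ⟨a, ss, rfl, ha, -⟩ := hs.exists_of_fn_right
    obtain ⟨f', rfl, hf'f, -⟩ := eqvO_some_right.1 ha
    exact .prec (precedes_of_qp_of_precedes hf'f hfg) (fun t ht => ih t ht hs)
      (hs.width_eq ▸ hlen)
  | seq _ hlen ih =>
    obtain ⟨a, ss, rfl, ha, -⟩ := hs.exists_of_fn_right
    obtain ⟨f', rfl, -⟩ := eqvO_some_right.1 ha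
    exact .seq (fun t ht => ih t ht hs) (hs.width_eq ▸ hlen)
  | mult N hsum hex _ hlen ih =>
    obtain ⟨a, ss, rfl, ha, π, hπ⟩ := hs.exists_of_fn_right
    obtain rfl := eqvO_none_right.1 ha
    obtain ⟨hsum', hex', hall'⟩ := MultDecomp.reindex π hπ ⟨hsum, hex, ih⟩
    exact .mult _ hsum' hex' hall' (hs.width_eq ▸ hlen)

theorem Gpop.termEq_right [Std.Refl qp] [IsTrans F qp] (h : Gpop qp k l s t)
    (hu : TermEq (eqvO qp) t u) : Gpop qp k l s u := by
  induction h generalizing u with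
  | base h => exact .base (h.termEq_right hu)
  | sub hmem _ ih => exact .sub hmem (ih hu)
  | sub_eq hmem heq => exact .sub_eq hmem (heq.trans hu)
  | seq j₀ _ hrest hlen ih =>
    obtain ⟨b, us, rfl, hb, π, hπ⟩ := hu.exists_of_fn_left
    obtain rfl := eqvO_none_left.1 hb
    refine .seq (π j₀) (ih (hπ j₀)) (fun j hj => ?_) (Fin.equiv_iff_eq.1 ⟨π⟩ ▸ hlen)
    obtain ⟨i, rfl⟩ := π.surjective j
    exact (hrest i (ne_of_apply_ne π hj)).termEq_right (hπ i)
  | eqv hfg hgf _ ih =>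
    obtain ⟨b, us, rfl, hgb, π, hπ⟩ := hu.exists_of_fn_left
    obtain ⟨g', rfl, hgg', hg'g⟩ := eqvO_some_left.1 hgb
    exact .eqv (trans_of qp hfg hgg') (trans_of qp hg'g hgf) (ih (.fn trivial π π.bijective hπ))
  | mult N hsum hex _ hlen ih =>
    obtain ⟨b, us, rfl, hb, π, hπ⟩ := hu.exists_of_fn_left
    obtain rfl := eqvO_none_left.1 hb
    obtain ⟨N', hsum', hex', hall'⟩ :=
      MultDecomp.exists_of_rel ⟨hsum, hex, ih⟩ (List.rel_coe_of_equiv π hπ)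
    exact .mult N' hsum' hex' hall' (Fin.equiv_iff_eq.1 ⟨π⟩ ▸ hlen)

theorem Gpop.termEq_left [Std.Refl qp] [IsTrans F qp] (h : Gpop qp k l t u)
    (hs : TermEq (eqvO qp) s t) : Gpop qp k l s u := by
  induction h generalizing s with
  | base h => exact .base (h.termEq_left hs)
  | sub hmem _ ih =>
    obtain ⟨a, ss, rfl, -, π, hπ⟩ := hs.exists_of_fn_right
    obtain ⟨s', hs', hs'i⟩ := List.exists_mem_rel_of_equiv π hπ hmem
    exact .sub hs' (ih hs'i)
  | sub_eq hmem heq =>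
    obtain ⟨a, ss, rfl, -, π, hπ⟩ := hs.exists_of_fn_right
    obtain ⟨s', hs', hs'i⟩ := List.exists_mem_rel_of_equiv π hπ hmem
    exact .sub_eq hs' (hs'i.trans heq)
  | seq j₀ _ hrest hlen ih =>
    obtain ⟨a, ss, rfl, ha, -⟩ := hs.exists_of_fn_right
    obtain ⟨f', rfl, -⟩ := eqvO_some_right.1 ha
    exact .seq j₀ (ih hs) (fun j hj => (hrest j hj).termEq_left hs) (hs.width_eq ▸ hlen)
  | eqv hfg hgf _ ih =>
    obtain ⟨a, ss, rfl, ha, π, hπ⟩ := hs.exists_of_fn_right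
    obtain ⟨f', rfl, hf'f, hff'⟩ := eqvO_some_right.1 ha
    exact .eqv (trans_of qp hf'f hfg) (trans_of qp hgf hff') (ih (.fn trivial π π.bijective hπ))
  | mult N hsum hex _ hlen ih =>
    obtain ⟨a, ss, rfl, ha, π, hπ⟩ := hs.exists_of_fn_right
    obtain rfl := eqvO_none_right.1 ha
    obtain ⟨hsum', hex', hall'⟩ := MultDecomp.reindex π hπ ⟨hsum, hex, ih⟩
    exact .mult _ hsum' hex' hall' (hs.width_eq ▸ hlen)

end Term

/-- Composing the strict approximation order `>ₖ` with the term equivalence `≈`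
on either side stays inside the strict order:
`>ₖ · ≈ ⊆ >ₖ` and `≈ · >ₖ ⊆ >ₖ`. -/
theorem gpop_compat_termEq {F V : Type} (qp : F → F → Prop)
    (hrefl : Reflexive qp) (htrans : Transitive qp) (k : ℕ) :
    (∀ s t u : SeqT F V, Gpop qp k k s t → TermEq (eqvO qp) t u → Gpop qp k k s u) ∧
    (∀ s t u : SeqT F V, TermEq (eqvO qp) s t → Gpop qp k k t u → Gpop qp k k s u) := by
  have : Std.Refl qp := ⟨hrefl⟩
  have : IsTrans F qp := ⟨fun _ _ _ => @htrans _ _ _⟩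
  exact ⟨fun _ _ _ h hu => h.termEq_right hu, fun _ _ _ hs h => h.termEq_left hs⟩
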